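/- Let n ≥ 1, let W : Fin n → M₂(ℂ) satisfy W(i) ∈ {H, S} for every i, and let V = ⊗_{i=1}^n W(i) be the corresponding Kronecker product. Then for every f : Fin n → Fin 4 there exist g : Fin n → Fin 4 and a sign ω ∈ {1, −1} such that V† · P_f · V = ω • P_g, where V† is the conjugate transpose of V. (Conjugation by the trap circuits' random H/S layers maps Pauli errors to Pauli errors, up to sign.) -/
import Mathlib


open Matrix

/-- The four single-qubit Pauli matrices I, X, Y, Z. -/
noncomputable def pauli : Fin 4 → Matrix (Fin 2) (Fin 2) ℂ :=
  ![!![1, 0; 0, 1], !![0, 1; 1, 0], !![0, -Complex.I; Complex.I, 0], !![1, 0; 0, -1]]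

/-- The `n`-qubit Pauli string `⊗ᵢ σ_{f i}`. -/
noncomputable def PauliString (n : ℕ) (f : Fin n → Fin 4) :
    Matrix (Fin n → Fin 2) (Fin n → Fin 2) ℂ :=
  Matrix.of fun x y => ∏ i, pauli (f i) (x i) (y i)

/-- The Hadamard matrix `H = (1/√2)!![1,1;1,-1]`. -/
noncomputable def Hm : Matrix (Fin 2) (Fin 2) ℂ :=
  (1 / ((Real.sqrt 2 : ℝ) : ℂ)) • !![1, 1; 1, -1]

/-- The phase matrix `S = diag(1, i)`. -/
noncomputable def Sm : Matrix (Fin 2) (Fin 2) ℂ := !![1, 0; 0, Complex.I]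

/-- The `n`-fold Kronecker product `⊗ᵢ W i` of single-qubit matrices. -/
noncomputable def tensorN (n : ℕ) (W : Fin n → Matrix (Fin 2) (Fin 2) ℂ) :
    Matrix (Fin n → Fin 2) (Fin n → Fin 2) ℂ :=
  Matrix.of fun x y => ∏ i, W i (x i) (y i)


lemma sqrt2_sq : ((Real.sqrt 2 : ℝ) : ℂ) * ((Real.sqrt 2 : ℝ) : ℂ) = 2 := by
  norm_cast
  exact Real.mul_self_sqrt (by norm_num)

lemma qubit_conj (M : Matrix (Fin 2) (Fin 2) ℂ) (hM : M = Hm ∨ M = Sm) (a : Fin 4) :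
    ∃ (b : Fin 4) (ω : ℂ), (ω = 1 ∨ ω = -1) ∧ Mᴴ * pauli a * M = ω • pauli b := by
  have h2 := sqrt2_sq
  have hne : ((Real.sqrt 2 : ℝ) : ℂ) ≠ 0 := by
    intro h; rw [h] at h2; simp at h2
  have h2p : ((Real.sqrt 2 : ℝ) : ℂ) ^ 2 = 2 := by rw [sq]; exact h2
  have h4p : ((Real.sqrt 2 : ℝ) : ℂ) ^ 4 = 4 := by
    have : ((Real.sqrt 2 : ℝ) : ℂ) ^ 4 = (((Real.sqrt 2 : ℝ) : ℂ) ^ 2) ^ 2 := by ring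
    rw [this, h2p]; norm_num
  rcases hM with h | h <;> subst h <;> fin_cases a
  · exact ⟨0, 1, Or.inl rfl, by ext i j; fin_cases i <;> fin_cases j <;>
      simp [Hm, pauli, Matrix.mul_apply, Fin.sum_univ_two, Matrix.conjTranspose_apply] <;>
      field_simp <;> ring_nf <;> simp [h2p, h4p] <;> ring_nf⟩
  · exact ⟨3, 1, Or.inl rfl, by ext i j; fin_cases i <;> fin_cases j <;>
      simp [Hm, pauli, Matrix.mul_apply, Fin.sum_univ_two, Matrix.conjTranspose_apply] <;>
      field_simp <;> ring_nf <;> simp [h2p, h4p] <;> ring_nf⟩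
  · exact ⟨2, -1, Or.inr rfl, by ext i j; fin_cases i <;> fin_cases j <;>
      simp [Hm, pauli, Matrix.mul_apply, Fin.sum_univ_two, Matrix.conjTranspose_apply] <;>
      field_simp <;> ring_nf <;> simp [h2p, h4p] <;> ring_nf⟩
  · exact ⟨1, 1, Or.inl rfl, by ext i j; fin_cases i <;> fin_cases j <;>
      simp [Hm, pauli, Matrix.mul_apply, Fin.sum_univ_two, Matrix.conjTranspose_apply] <;>
      field_simp <;> ring_nf <;> simp [h2p, h4p] <;> ring_nf⟩
  · exact ⟨0, 1, Or.inl rfl, by ext i j; fin_cases i <;> fin_cases j <;>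
      simp [Sm, pauli, Matrix.mul_apply, Fin.sum_univ_two, Matrix.conjTranspose_apply]⟩
  · exact ⟨2, -1, Or.inr rfl, by ext i j; fin_cases i <;> fin_cases j <;>
      simp [Sm, pauli, Matrix.mul_apply, Fin.sum_univ_two, Matrix.conjTranspose_apply]⟩
  · exact ⟨1, 1, Or.inl rfl, by ext i j; fin_cases i <;> fin_cases j <;>
      simp [Sm, pauli, Matrix.mul_apply, Fin.sum_univ_two, Matrix.conjTranspose_apply] <;>
      ring_nf <;> simp [Complex.ext_iff]⟩
  · exact ⟨3, 1, Or.inl rfl, by ext i j; fin_cases i <;> fin_cases j <;>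
      simp [Sm, pauli, Matrix.mul_apply, Fin.sum_univ_two, Matrix.conjTranspose_apply]⟩

lemma tensorN_conjT (n : ℕ) (W : Fin n → Matrix (Fin 2) (Fin 2) ℂ) :
    (tensorN n W)ᴴ = tensorN n (fun i => (W i)ᴴ) := by
  ext x y
  simp [tensorN, conjTranspose_apply, star_prod]

lemma tensorN_mul (n : ℕ) (A B : Fin n → Matrix (Fin 2) (Fin 2) ℂ) :
    tensorN n A * tensorN n B = tensorN n (fun i => A i * B i) := by
  ext x y
  simp only [tensorN, mul_apply, of_apply, Matrix.mul_apply]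
  rw [Finset.prod_univ_sum, Fintype.piFinset_univ]
  exact Finset.sum_congr rfl fun z _ => (Finset.prod_mul_distrib).symm

lemma tensorN_smul (n : ℕ) (c : Fin n → ℂ) (M : Fin n → Matrix (Fin 2) (Fin 2) ℂ) :
    tensorN n (fun i => c i • M i) = (∏ i, c i) • tensorN n M := by
  ext x y
  simp [tensorN, Finset.prod_mul_distrib]


/-- **Conjugation by H/S layers maps Pauli strings to Pauli strings up to sign.**
If `V = ⊗ᵢ Wᵢ` with each `Wᵢ ∈ {H, S}`, then for every Pauli string `P_f` there are
`g` and a sign `ω ∈ {1, −1}` with `V† P_f V = ω • P_g`. -/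
theorem hs_layer_conj_pauli (n : ℕ) (hn : 1 ≤ n)
    (W : Fin n → Matrix (Fin 2) (Fin 2) ℂ) (hW : ∀ i, W i = Hm ∨ W i = Sm)
    (f : Fin n → Fin 4) :
    ∃ (g : Fin n → Fin 4) (ω : ℂ), (ω = 1 ∨ ω = -1) ∧
      (tensorN n W)ᴴ * PauliString n f * tensorN n W = ω • PauliString n g := by
  choose g ω hω hconj using fun i => qubit_conj (W i) (hW i) (f i)
  refine ⟨g, ∏ i, ω i, ?_, ?_⟩
  · exact Finset.prod_induction ω (fun x => x = 1 ∨ x = -1)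
      (by rintro a b (ha | ha) (hb | hb) <;> simp [ha, hb]) (Or.inl rfl) (fun i _ => hω i)
  · have hP : ∀ h : Fin n → Fin 4, PauliString n h = tensorN n (fun i => pauli (h i)) :=
      fun _ => rfl
    rw [hP, hP, tensorN_conjT, tensorN_mul, tensorN_mul]
    have : (fun i => (W i)ᴴ * pauli (f i) * W i) = fun i => ω i • pauli (g i) := by
      funext i; exact hconj i
    rw [this, tensorN_smul]
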